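/- Let l : List ℤ have length n ≥ 1 and suppose that for every index i < n, either l[i] is strictly less than every later element of l, or l[i] is strictly greater than every later element of l. Then qcost l = n*(n+1)/2 - 1. -/

import Mathlib

/-- Cost of the paper's simple QuickSort: each call on a list of length `N ≥ 2`
costs `N`, plus the cost of recursive calls on the strict-left and strict-right
partitions of the tail around the pivot `l.head!`. -/
def qcost (l : List ℤ) : ℕ :=
  if _h : l.length ≤ 1 then 0
  else
    l.length + qcost (l.tail.filter (· < l.head!)) + qcost (l.tail.filter (· > l.head!))
termination_by l.length
decreasing_by
  · calc (l.tail.filter (· < l.head!)).length ≤ l.tail.length := List.length_filter_le _ _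
      _ < l.length := by rw [List.length_tail]; omega
  · calc (l.tail.filter (· > l.head!)).length ≤ l.tail.length := List.length_filter_le _ _
      _ < l.length := by rw [List.length_tail]; omega

/-! An extremal pivot sends the whole tail to one side of the partition, so the cost of such a
list satisfies `qcost (a :: t) = |t| + 1 + qcost t`, and the cost of a list of length `n` is
`2 + 3 + ⋯ + n = n (n + 1) / 2 - 1`. -/

lemma qcost_nil : qcost [] = 0 := by
  rw [qcost, dif_pos (by simp)]

lemma qcost_singleton (a : ℤ) : qcost [a] = 0 := by
  rw [qcost, dif_pos (by simp)]

lemma qcost_cons (a : ℤ) {t : List ℤ} (ht : t ≠ []) :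
    qcost (a :: t) = t.length + 1 + qcost (t.filter (· < a)) + qcost (t.filter (· > a)) := by
  rw [qcost, dif_neg (by simpa [List.length_pos_iff] using ht)]
  rfl

lemma qcost_cons_of_forall_lt {a : ℤ} {t : List ℤ} (ht : t ≠ []) (h : ∀ x ∈ t, a < x) :
    qcost (a :: t) = t.length + 1 + qcost t := by
  rw [qcost_cons a ht, List.filter_eq_nil_iff.2 fun x hx => by simpa using (h x hx).le,
    List.filter_eq_self.2 fun x hx => by simpa using h x hx, qcost_nil, add_zero]

lemma qcost_cons_of_forall_gt {a : ℤ} {t : List ℤ} (ht : t ≠ []) (h : ∀ x ∈ t, x < a) :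
    qcost (a :: t) = t.length + 1 + qcost t := by
  rw [qcost_cons a ht, List.filter_eq_self.2 fun x hx => by simpa using h x hx,
    List.filter_eq_nil_iff.2 fun x hx => by simpa using (h x hx).le, qcost_nil, add_zero]

def ExtremalPivots {α : Type*} [LT α] : List α → Prop
  | [] => True
  | a :: t => ((∀ x ∈ t, a < x) ∨ ∀ x ∈ t, x < a) ∧ ExtremalPivots t

lemma extremalPivots_of_getElem! {α : Type*} [LT α] [Inhabited α] (l : List α)
    (h : ∀ i < l.length, (∀ j, i < j → j < l.length → l[i]! < l[j]!) ∨
      (∀ j, i < j → j < l.length → l[j]! < l[i]!)) :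
    ExtremalPivots l := by
  induction l with
  | nil => trivial
  | cons a t ih =>
    refine ⟨(h 0 (by simp)).imp (fun hlt x hx => ?_) (fun hgt x hx => ?_), ih fun i hi => ?_⟩
    · obtain ⟨i, hi, rfl⟩ := List.getElem_of_mem hx
      simpa [hi] using hlt (i + 1) (by omega) (by simpa)
    · obtain ⟨i, hi, rfl⟩ := List.getElem_of_mem hx
      simpa [hi] using hgt (i + 1) (by omega) (by simpa)
    · exact (h (i + 1) (by simpa)).imp
        (fun hlt j hij hj => by simpa using hlt (j + 1) (by omega) (by simpa))
        (fun hgt j hij hj => by simpa using hgt (j + 1) (by omega) (by simpa))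

lemma ExtremalPivots.two_mul_qcost_add_one {a : ℤ} {t : List ℤ} (h : ExtremalPivots (a :: t)) :
    2 * (qcost (a :: t) + 1) = (t.length + 1) * (t.length + 2) := by
  induction t generalizing a with
  | nil => simp [qcost_singleton]
  | cons b t ih =>
    obtain ⟨hhead, htail⟩ := h
    have hstep : qcost (a :: b :: t) = (b :: t).length + 1 + qcost (b :: t) :=
      hhead.elim (qcost_cons_of_forall_lt (List.cons_ne_nil b t))
        (qcost_cons_of_forall_gt (List.cons_ne_nil b t))
    rw [hstep, List.length_cons]
    linarith [ih htail]

/-- If every element of `l` is either strictly less than all later elements or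
strictly greater than all later elements, then `l` is a worst case for simple
QuickSort: its cost is exactly `n*(n+1)/2 - 1`. -/
theorem qcost_of_extremal (l : List ℤ) (n : ℕ) (hl : l.length = n) (hn : 1 ≤ n)
    (hext : ∀ i < n, (∀ j, i < j → j < n → l[i]! < l[j]!) ∨
                     (∀ j, i < j → j < n → l[j]! < l[i]!)) :
    qcost l = n * (n + 1) / 2 - 1 := by
  subst hl
  obtain ⟨a, t, rfl⟩ := List.exists_cons_of_length_pos hn
  have h := (extremalPivots_of_getElem! _ hext).two_mul_qcost_add_one
  rw [List.length_cons, ← h, Nat.mul_div_cancel_left _ two_pos, Nat.add_sub_cancel]
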